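/- arXiv:2509.21500 — 2 statements merged into one kernel-verified Lean document; each statement's English description precedes it below -/
import Mathlib

section
/- For 0 < c < 1 and β > 0, the expected gold reward of the tilted measure under the 'top c% wrong' proxy reward f_c equals ∫ u dπ_{f_c,β}(u) = (∫₀^{1−c} u·e^{u/β} du + ∫_{1−c}^{1} (2 − c − u)·e^{u/β} du) / (β·(e^{1/β} − 1)). -/
open MeasureTheory Real

/-- The uniform distribution on `[0,1]`: Lebesgue measure restricted to `[0,1]`. -/
noncomputable def U : Measure ℝ := volume.restrict (Set.Icc 0 1)

/-- Normalizing constant `Z_{f,β} = ∫₀¹ exp(f(u)/β) du`. -/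
noncomputable def Zf (f : ℝ → ℝ) (β : ℝ) : ℝ := ∫ u in Set.Icc (0:ℝ) 1, Real.exp (f u / β)

/-- The RFT-aligned (tilted) reward distribution: density `exp(f(u)/β)/Z_{f,β}` w.r.t. `U`. -/
noncomputable def tilted (f : ℝ → ℝ) (β : ℝ) : Measure ℝ :=
  U.withDensity fun u => ENNReal.ofReal (Real.exp (f u / β) / Zf f β)

/-- The 'top c% wrong' misspecification map. -/
noncomputable def ftop (c : ℝ) : ℝ → ℝ := fun u => if u ≤ 1 - c then u else 2 - c - u

/-! On `[1 - c, 1]` the map `ftop c` is the reflection `u ↦ 2 - c - u` of that interval, which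
preserves Lebesgue measure. Hence the normalizing constant is the one of the identity,
`∫₀¹ e^{u/β} du = β (e^{1/β} - 1)`, and reflecting the second half of `∫₀¹ u e^{ftop c u / β} du`
moves the misspecification from the exponent onto the factor `u`. -/

open Set intervalIntegral
open scoped Interval

lemma Zf_nonneg (f : ℝ → ℝ) (β : ℝ) : 0 ≤ Zf f β :=
  setIntegral_nonneg measurableSet_Icc fun _ _ => (Real.exp_pos _).le

lemma integral_tilted {f : ℝ → ℝ} (hf : Measurable f) (β : ℝ) (g : ℝ → ℝ) :
    ∫ u, g u ∂(tilted f β) = (∫ u in Icc (0:ℝ) 1, Real.exp (f u / β) * g u) / Zf f β := by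
  have hdens : Measurable fun u => ENNReal.ofReal (Real.exp (f u / β) / Zf f β) := by
    fun_prop
  rw [tilted, U, integral_withDensity_eq_integral_toReal_smul hdens
    (ae_of_all _ fun _ => ENNReal.ofReal_lt_top), ← MeasureTheory.integral_div]
  refine integral_congr_ae (ae_of_all _ fun u => ?_)
  have hZ := Zf_nonneg f β
  dsimp only
  rw [ENNReal.toReal_ofReal (by positivity), smul_eq_mul, div_mul_eq_mul_div]

lemma intervalIntegral_ite_le {φ ψ : ℝ → ℝ} (hφ : Continuous φ) (hψ : Continuous ψ)
    {a m b : ℝ} (ham : a ≤ m) (hmb : m ≤ b) :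
    ∫ u in a..b, (if u ≤ m then φ u else ψ u) = (∫ u in a..m, φ u) + ∫ u in m..b, ψ u := by
  have hleft : EqOn (fun u => if u ≤ m then φ u else ψ u) φ (Ι a m) := fun u hu =>
    if_pos (uIoc_of_le ham ▸ hu).2
  have hright : EqOn (fun u => if u ≤ m then φ u else ψ u) ψ (Ι m b) := fun u hu =>
    if_neg (not_le.2 (uIoc_of_le hmb ▸ hu).1)
  rw [← integral_add_adjacent_intervals
      ((intervalIntegrable_congr hleft).2 (hφ.intervalIntegrable a m))
      ((intervalIntegrable_congr hright).2 (hψ.intervalIntegrable m b)),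
    integral_congr_ae (ae_of_all _ hleft), integral_congr_ae (ae_of_all _ hright)]

lemma ftop_measurable (c : ℝ) : Measurable (ftop c) :=
  Measurable.ite (measurableSet_le measurable_id measurable_const) measurable_id (by fun_prop)

lemma setIntegral_Icc_ftop {c : ℝ} (hc : 0 ≤ c) (hc1 : c ≤ 1) {g : ℝ → ℝ → ℝ}
    (hg : Continuous fun p : ℝ × ℝ => g p.1 p.2) :
    ∫ u in Icc (0:ℝ) 1, g u (ftop c u)
      = (∫ u in (0:ℝ)..(1 - c), g u u) + ∫ u in (1 - c)..1, g u (2 - c - u) := by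
  have hite : ∀ u, g u (ftop c u) = if u ≤ 1 - c then g u u else g u (2 - c - u) := fun u =>
    apply_ite (g u) _ _ _
  simp_rw [hite]
  rw [integral_Icc_eq_integral_Ioc, ← integral_of_le zero_le_one,
    intervalIntegral_ite_le (by fun_prop) (by fun_prop) (by linarith) (by linarith)]

lemma integral_comp_two_sub_sub (c : ℝ) (g : ℝ → ℝ) :
    ∫ u in (1 - c)..1, g (2 - c - u) = ∫ u in (1 - c)..1, g u := by
  rw [integral_comp_sub_left g (2 - c)]
  ring_nf

lemma integral_exp_div_zero_one {β : ℝ} (hβ : β ≠ 0) :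
    ∫ u in (0:ℝ)..1, Real.exp (u / β) = β * (Real.exp (1 / β) - 1) := by
  simp [integral_comp_div (fun u => Real.exp u) hβ]

lemma Zf_ftop {c : ℝ} (hc : 0 ≤ c) (hc1 : c ≤ 1) {β : ℝ} (hβ : β ≠ 0) :
    Zf (ftop c) β = β * (Real.exp (1 / β) - 1) := by
  rw [Zf, setIntegral_Icc_ftop hc hc1 (g := fun _ v => Real.exp (v / β)) (by fun_prop),
    integral_comp_two_sub_sub c (fun v => Real.exp (v / β)),
    integral_add_adjacent_intervals (Continuous.intervalIntegrable (by fun_prop) _ _)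
      (Continuous.intervalIntegrable (by fun_prop) _ _),
    integral_exp_div_zero_one hβ]

/-- Expected gold reward of the tilted measure under the 'top c% wrong' proxy reward. -/
theorem expected_reward_top_wrong (c : ℝ) (hc : 0 < c) (hc1 : c < 1) (β : ℝ) (hβ : 0 < β) :
    ∫ u, u ∂(tilted (ftop c) β)
      = ((∫ u in (0:ℝ)..(1 - c), u * Real.exp (u / β))
          + ∫ u in (1 - c)..(1:ℝ), (2 - c - u) * Real.exp (u / β))
        / (β * (Real.exp (1 / β) - 1)) := by
  have hreflect : ∫ u in (1 - c)..1, Real.exp ((2 - c - u) / β) * u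
      = ∫ u in (1 - c)..1, (2 - c - u) * Real.exp (u / β) := by
    rw [← integral_comp_two_sub_sub c]
    simp only [sub_sub_cancel, mul_comm]
  rw [integral_tilted (ftop_measurable c), Zf_ftop hc.le hc1.le hβ.ne',
    setIntegral_Icc_ftop hc.le hc1.le (g := fun u v => Real.exp (v / β) * u) (by fun_prop),
    hreflect]
  simp only [mul_comm (Real.exp _)]
end

section
/- Misspecification in the low-reward region does not cap attainable performance: for 0 < c < 1, the 'worst c% wrong' win rate W_worst(β) = (∫₀^{c} (c − u)·e^{u/β} du + ∫_{c}^{1} u·e^{u/β} du) / (β·(e^{1/β} − 1)) tends to 1 as β → 0⁺. -/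
/-!
Both integrals have elementary antiderivatives, and after dividing numerator and denominator
by `exp (1 / β)` the win rate becomes a rational expression in `β`, `exp ((c - 1) / β)` and
`exp (-1 / β)`. Since `c < 1`, both exponentials vanish as `β → 0⁺`, leaving `(1 - β) / 1 → 1`:
the tilted reference distribution concentrates at `u = 1`, where the proxy reward is correct.
-/

open MeasureTheory Real Filter

/-- Win rate under the 'worst c% wrong' proxy reward. -/
noncomputable def Wworst (c β : ℝ) : ℝ :=
  ((∫ u in (0:ℝ)..c, (c - u) * Real.exp (u / β))
      + ∫ u in c..(1:ℝ), u * Real.exp (u / β))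
    / (β * (Real.exp (1 / β) - 1))

open scoped Topology

theorem integral_affine_mul_exp_div (p q β a b : ℝ) (hβ : β ≠ 0) :
    ∫ u in a..b, (p + q * u) * exp (u / β)
      = (β * (p + q * b) - q * β ^ 2) * exp (b / β)
        - (β * (p + q * a) - q * β ^ 2) * exp (a / β) := by
  refine intervalIntegral.integral_eq_sub_of_hasDerivAt
    (f := fun u => (β * (p + q * u) - q * β ^ 2) * exp (u / β)) (fun u _ => ?_)
    ((by fun_prop : Continuous fun u => (p + q * u) * exp (u / β)).intervalIntegrable a b)
  have hexp : HasDerivAt (fun u => exp (u / β)) (exp (u / β) * β⁻¹) u :=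
    ((hasDerivAt_id u).div_const β).exp.congr_deriv (by simp [div_eq_mul_inv])
  have hlin : HasDerivAt (fun u => β * (p + q * u) - q * β ^ 2) (β * q) u := by
    simpa using ((((hasDerivAt_id u).const_mul q).const_add p).const_mul β).sub_const (q * β ^ 2)
  refine (hlin.mul hexp).congr_deriv ?_
  field_simp
  ring

theorem Wworst_eq {c β : ℝ} (hβ : 0 < β) :
    Wworst c β = ((1 - β) + (2 * β - c) * exp ((c - 1) / β) - (β + c) * exp (-1 / β))
      / (1 - exp (-1 / β)) := by
  have hlow := integral_affine_mul_exp_div c (-1) β 0 c hβ.ne'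
  have hhigh := integral_affine_mul_exp_div 0 1 β c 1 hβ.ne'
  simp only [neg_one_mul, ← sub_eq_add_neg, zero_add, one_mul] at hlow hhigh
  have hx : 1 < exp (1 / β) := one_lt_exp_iff.mpr (by positivity)
  have hx' : exp (1 / β) - 1 ≠ 0 := by linarith
  have hinv : 1 - (exp (1 / β))⁻¹ ≠ 0 := by
    linarith [inv_lt_one_of_one_lt₀ hx]
  have hmid : exp ((c - 1) / β) = exp (c / β) / exp (1 / β) := by rw [← exp_sub, sub_div]
  have htop : exp (-1 / β) = (exp (1 / β))⁻¹ := by rw [← exp_neg, neg_div]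
  rw [Wworst, hlow, hhigh, hmid, htop, zero_div, exp_zero]
  field_simp
  ring

theorem tendsto_exp_div_nhdsGT_zero {k : ℝ} (hk : k < 0) :
    Tendsto (fun β => exp (k / β)) (𝓝[>] 0) (𝓝 0) := by
  simp only [div_eq_mul_inv]
  exact tendsto_exp_atBot.comp (tendsto_inv_nhdsGT_zero.const_mul_atTop_of_neg hk)

theorem worst_wrong_win_rate_limit_general (c : ℝ) (hc1 : c < 1) :
    Tendsto (fun β => Wworst c β) (nhdsWithin 0 (Set.Ioi 0)) (nhds 1) := by
  have hid : Tendsto (fun β : ℝ => β) (𝓝[>] 0) (𝓝 0) := nhdsWithin_le_nhds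
  have hmid := tendsto_exp_div_nhdsGT_zero (k := c - 1) (by linarith)
  have htop := tendsto_exp_div_nhdsGT_zero (k := -1) (by norm_num)
  refine Tendsto.congr' (eventually_nhdsWithin_of_forall fun β hβ => (Wworst_eq hβ).symm) ?_
  have hnum := (((tendsto_const_nhds (x := (1 : ℝ))).sub hid).add
    (((hid.const_mul 2).sub (tendsto_const_nhds (x := c))).mul hmid)).sub
    ((hid.add (tendsto_const_nhds (x := c))).mul htop)
  have hden := (tendsto_const_nhds (x := (1 : ℝ))).sub htop
  norm_num at hnum hden
  have hlim := hnum.div hden one_ne_zero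
  rw [div_one] at hlim
  exact hlim

/-- Misspecification in the low-reward region does not cap attainable performance:
the 'worst c% wrong' win rate tends to `1` as `β → 0⁺`. -/
theorem worst_wrong_win_rate_limit (c : ℝ) (hc : 0 < c) (hc1 : c < 1) :
    Tendsto (fun β => Wworst c β) (nhdsWithin 0 (Set.Ioi 0)) (nhds 1) :=
  worst_wrong_win_rate_limit_general c hc1
end
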